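/- arXiv:2506.00414 — 2 statements merged into one kernel-verified Lean document; each statement's English description precedes it below -/
import Mathlib

section
/- Let k ≥ 2 and let G be the join of K_1 with k disjoint copies of K_2; concretely, G has vertex set {c} ∪ {x_1, y_1, …, x_k, y_k}, the vertex c is adjacent to all other vertices, x_i is adjacent to y_i for each i ∈ [k], and there are no other edges. Then the set W = {x_1, …, x_k} of size k is a local resolving set of G. -/
/-- A set `W` of vertices is a local resolving set of `G` if every pair of
adjacent vertices lying outside `W` is distinguished by some vertex of `W`. -/
def IsLocalResolvingSet {V : Type*} (G : SimpleGraph V) (W : Set V) : Prop :=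
  ∀ u v : V, G.Adj u v → u ∉ W → v ∉ W → ∃ w ∈ W, G.dist u w ≠ G.dist v w

/-- The join of `K_1` with `k` disjoint copies of `K_2`: the vertex `none` is the
center `c`, and `some (i, 0)`, `some (i, 1)` are the vertices `x_i`, `y_i` of the
`i`-th copy of `K_2`.  The center is adjacent to every other vertex, `x_i` is
adjacent to `y_i`, and there are no other edges. -/
def joinK2 (k : ℕ) : SimpleGraph (Option (Fin k × Fin 2)) :=
  SimpleGraph.fromRel (fun u v =>
    u = none ∨ ∃ i : Fin k, u = some (i, 0) ∧ v = some (i, 1))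


section joinK2

variable {k : ℕ}

lemma joinK2_adj_none_some (p : Fin k × Fin 2) : (joinK2 k).Adj none (some p) := by
  simp [joinK2]

lemma joinK2_not_adj_of_fst_ne {i j : Fin k} (hij : i ≠ j) (a b : Fin 2) :
    ¬ (joinK2 k).Adj (some (i, a)) (some (j, b)) := by
  simp only [joinK2, SimpleGraph.fromRel_adj, reduceCtorEq, false_or, Option.some.injEq,
    Prod.mk.injEq]
  rintro ⟨-, ⟨m, ⟨rfl, -⟩, rfl, -⟩ | ⟨m, ⟨rfl, -⟩, rfl, -⟩⟩ <;> simp_all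

/-- Apart from the edges at the centre, every edge is some `x_i y_i`. -/
lemma joinK2_eq_none_or_eq_none_of_adj {u v : Option (Fin k × Fin 2)}
    (huv : (joinK2 k).Adj u v) (hu : ∀ i, u ≠ some (i, 0)) (hv : ∀ i, v ≠ some (i, 0)) :
    u = none ∨ v = none := by
  simp only [joinK2, SimpleGraph.fromRel_adj] at huv
  obtain ⟨-, (hu' | ⟨i, rfl, -⟩) | (hv' | ⟨i, rfl, -⟩)⟩ := huv
  · exact .inl hu'
  · exact absurd rfl (hu i)
  · exact .inr hv'
  · exact absurd rfl (hv i)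

/-- The centre is at distance `1` from any `x_j`, whereas a vertex of another copy of `K_2`
is not adjacent to `x_j`. -/
lemma joinK2_exists_dist_ne (hk : 2 ≤ k) (p : Fin k × Fin 2) :
    ∃ j : Fin k, (joinK2 k).dist none (some (j, 0)) ≠ (joinK2 k).dist (some p) (some (j, 0)) := by
  obtain ⟨j, hj⟩ := Fintype.exists_ne_of_one_lt_card (by rw [Fintype.card_fin]; omega) p.1
  refine ⟨j, ?_⟩
  rw [SimpleGraph.dist_eq_one_iff_adj.mpr (joinK2_adj_none_some _), ne_comm, Ne,
    SimpleGraph.dist_eq_one_iff_adj]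
  exact joinK2_not_adj_of_fst_ne hj.symm p.2 0

end joinK2

theorem xs_isLocalResolvingSet (k : ℕ) (hk : 2 ≤ k) :
    (Finset.image (fun i : Fin k => (some (i, 0) : Option (Fin k × Fin 2)))
        Finset.univ).card = k ∧
    IsLocalResolvingSet (joinK2 k)
      ↑(Finset.image (fun i : Fin k => (some (i, 0) : Option (Fin k × Fin 2)))
        Finset.univ) := by
  refine ⟨?_, fun u v huv hu hv => ?_⟩
  · rw [Finset.card_image_of_injective _ fun i j h => by simpa using h]
    simp
  rw [Finset.coe_image, Finset.coe_univ, Set.image_univ] at hu hv ⊢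
  rw [Set.exists_range_iff]
  have hu' : ∀ i, u ≠ some (i, 0) := fun i h => hu ⟨i, h.symm⟩
  have hv' : ∀ i, v ≠ some (i, 0) := fun i h => hv ⟨i, h.symm⟩
  rcases joinK2_eq_none_or_eq_none_of_adj huv hu' hv' with rfl | rfl
  · obtain ⟨p, rfl⟩ := Option.ne_none_iff_exists'.mp huv.ne.symm
    exact joinK2_exists_dist_ne hk p
  · obtain ⟨p, rfl⟩ := Option.ne_none_iff_exists'.mp huv.ne
    exact (joinK2_exists_dist_ne hk p).imp fun _ => Ne.symm
end

section
/- Let k ≥ 2 and let G be the join of K_1 with k disjoint copies of K_2; concretely, G has vertex set {c} ∪ {x_1, y_1, …, x_k, y_k}, the vertex c is adjacent to all other vertices, x_i is adjacent to y_i for each i ∈ [k], and there are no other edges. Then every local resolving set of G contains at least one of x_i, y_i for each i ∈ [k], and hence has cardinality at least k. Consequently dim_l(G) = k = ⌊n(G)/2⌋, where n(G) = 2k + 1. -/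
/-- The local metric dimension of a finite graph: the minimum cardinality of a
local resolving set. -/
noncomputable def localMetricDim {V : Type*} [Fintype V] (G : SimpleGraph V) : ℕ :=
  sInf {n | ∃ W : Finset V, IsLocalResolvingSet G ↑W ∧ W.card = n}

namespace SimpleGraph

variable {V : Type*} {G : SimpleGraph V} {u v w : V}

/-- A shortest walk from `v` to `w` either starts with the edge `vu`, or its first edge can be
replaced by an edge out of `u`. -/
theorem dist_le_dist_of_adj_of_forall_adj (huv : G.Adj u v)
    (hN : ∀ a, a ≠ u → G.Adj v a → G.Adj u a) (hvw : v ≠ w) : G.dist u w ≤ G.dist v w := by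
  by_cases hreach : G.Reachable v w
  · obtain ⟨p, hp⟩ := hreach.exists_walk_length_eq_dist
    cases p with
    | nil => exact absurd rfl hvw
    | @cons _ a _ hva q =>
      rw [← hp, Walk.length_cons]
      by_cases hau : a = u
      · subst hau
        exact (dist_le q).trans (Nat.le_succ _)
      · exact dist_le (Walk.cons (hN a hau hva) q)
  · have : ¬G.Reachable u w := fun h ↦ hreach (huv.symm.reachable.trans h)
    rw [dist_eq_zero_of_not_reachable this]
    exact Nat.zero_le _

theorem dist_eq_dist_of_adj_of_forall_adj_iff (huv : G.Adj u v)
    (hN : ∀ a, a ≠ u → a ≠ v → (G.Adj u a ↔ G.Adj v a)) (huw : u ≠ w) (hvw : v ≠ w) :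
    G.dist u w = G.dist v w :=
  le_antisymm
    (dist_le_dist_of_adj_of_forall_adj huv
      (fun a hau hva ↦ (hN a hau (G.ne_of_adj hva).symm).2 hva) hvw)
    (dist_le_dist_of_adj_of_forall_adj huv.symm
      (fun a hva hua ↦ (hN a (G.ne_of_adj hua).symm hva).1 hua) huw)

end SimpleGraph

/-- Adjacent true twins are separated only by themselves. -/
theorem IsLocalResolvingSet.mem_or_mem_of_adj_of_forall_adj_iff {V : Type*}
    {G : SimpleGraph V} {W : Set V} (hW : IsLocalResolvingSet G W) {u v : V} (huv : G.Adj u v)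
    (hN : ∀ a, a ≠ u → a ≠ v → (G.Adj u a ↔ G.Adj v a)) : u ∈ W ∨ v ∈ W := by
  by_contra! h
  obtain ⟨w, hwW, hne⟩ := hW u v huv h.1 h.2
  exact hne (G.dist_eq_dist_of_adj_of_forall_adj_iff huv hN
    (fun huw ↦ h.1 (huw ▸ hwW)) (fun hvw ↦ h.2 (hvw ▸ hwW)))

theorem localMetricDim_eq_of_isLocalResolvingSet {V : Type*} [Fintype V] {G : SimpleGraph V}
    {W : Finset V} (hW : IsLocalResolvingSet G ↑W)
    (hmin : ∀ W' : Finset V, IsLocalResolvingSet G ↑W' → W.card ≤ W'.card) :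
    localMetricDim G = W.card := by
  have hmem : W.card ∈ {n | ∃ W : Finset V, IsLocalResolvingSet G ↑W ∧ W.card = n} :=
    ⟨W, hW, rfl⟩
  refine le_antisymm (Nat.sInf_le hmem) ?_
  obtain ⟨W', hW', hcard⟩ := Nat.sInf_mem ⟨_, hmem⟩
  rw [localMetricDim, ← hcard]
  exact hmin W' hW'

namespace joinK2

variable {k : ℕ}

theorem adj_none_some (p : Fin k × Fin 2) : (joinK2 k).Adj none (some p) := by
  simp [joinK2, SimpleGraph.fromRel_adj]

theorem adj_some_some {i j : Fin k} {b c : Fin 2} :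
    (joinK2 k).Adj (some (i, b)) (some (j, c)) ↔ i = j ∧ b ≠ c := by
  simp only [joinK2, SimpleGraph.fromRel_adj]
  fin_cases b <;> fin_cases c <;> simp [eq_comm]

theorem adj_pair_iff {i : Fin k} {a : Option (Fin k × Fin 2)} (ha₀ : a ≠ some (i, 0))
    (ha₁ : a ≠ some (i, 1)) : (joinK2 k).Adj (some (i, 0)) a ↔ (joinK2 k).Adj (some (i, 1)) a := by
  rcases a with _ | ⟨j, c⟩
  · exact iff_of_true (adj_none_some _).symm (adj_none_some _).symm
  · simp only [adj_some_some]
    fin_cases c <;> grind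

theorem mem_or_mem_of_isLocalResolvingSet {W : Set (Option (Fin k × Fin 2))}
    (hW : IsLocalResolvingSet (joinK2 k) W) (i : Fin k) : some (i, 0) ∈ W ∨ some (i, 1) ∈ W :=
  hW.mem_or_mem_of_adj_of_forall_adj_iff (adj_some_some.2 ⟨rfl, by decide⟩)
    fun _ ↦ adj_pair_iff

theorem le_card_of_isLocalResolvingSet {W : Finset (Option (Fin k × Fin 2))}
    (hW : IsLocalResolvingSet (joinK2 k) ↑W) : k ≤ W.card := by
  classical
  let pick (i : Fin k) : Option (Fin k × Fin 2) :=
    if some (i, 0) ∈ W then some (i, 0) else some (i, 1)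
  have hpick : Set.MapsTo pick (Finset.univ : Finset (Fin k)) W := fun i _ ↦ by
    rcases mem_or_mem_of_isLocalResolvingSet hW i with h | h <;> grind
  have hinj : Set.InjOn pick (Finset.univ : Finset (Fin k)) := fun i _ j _ hij ↦ by grind
  simpa using Finset.card_le_card_of_injOn pick hpick hinj

variable (k) in
def xVertices : Finset (Option (Fin k × Fin 2)) :=
  Finset.univ.image fun i ↦ some (i, 0)

theorem card_xVertices : (xVertices k).card = k := by
  rw [xVertices, Finset.card_image_of_injective _ (fun i j h ↦ by simpa using h)]
  exact Finset.card_fin k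

theorem dist_none_ne_dist_some_one_of_ne {i j : Fin k} (hij : i ≠ j) :
    (joinK2 k).dist none (some (j, 0)) ≠ (joinK2 k).dist (some (i, 1)) (some (j, 0)) := by
  rw [SimpleGraph.dist_eq_one_iff_adj.2 (adj_none_some _), ne_comm, ne_eq,
    SimpleGraph.dist_eq_one_iff_adj, adj_some_some]
  exact fun h ↦ hij h.1

theorem isLocalResolvingSet_xVertices (hk : 2 ≤ k) :
    IsLocalResolvingSet (joinK2 k) ↑(xVertices k) := by
  have hsep (i : Fin k) : ∃ w ∈ (xVertices k : Set _),
      (joinK2 k).dist none w ≠ (joinK2 k).dist (some (i, 1)) w := by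
    have : Nontrivial (Fin k) := Fin.nontrivial_iff_two_le.2 hk
    obtain ⟨j, hji⟩ := exists_ne i
    exact ⟨some (j, 0), by simp [xVertices], dist_none_ne_dist_some_one_of_ne hji.symm⟩
  have hx (i : Fin k) : (some (i, 0) : Option (Fin k × Fin 2)) ∈ (xVertices k : Set _) := by
    simp [xVertices]
  rintro (_ | ⟨i, b⟩) (_ | ⟨j, c⟩) huv hu hv
  · exact absurd huv (SimpleGraph.irrefl _)
  · fin_cases c
    · exact (hv (hx j)).elim
    · exact hsep j
  · fin_cases b
    · exact (hu (hx i)).elim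
    · obtain ⟨w, hw, hne⟩ := hsep i
      exact ⟨w, hw, hne.symm⟩
  · fin_cases b
    · exact (hu (hx i)).elim
    fin_cases c
    · exact (hv (hx j)).elim
    exact absurd (adj_some_some.1 huv).2 (by decide)

end joinK2

theorem localMetricDim_joinK2 (k : ℕ) (hk : 2 ≤ k) :
    (∀ W : Set (Option (Fin k × Fin 2)), IsLocalResolvingSet (joinK2 k) W →
      ∀ i : Fin k, (some (i, 0)) ∈ W ∨ (some (i, 1)) ∈ W) ∧
    (∀ W : Finset (Option (Fin k × Fin 2)), IsLocalResolvingSet (joinK2 k) ↑W →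
      k ≤ W.card) ∧
    localMetricDim (joinK2 k) = k ∧
    Fintype.card (Option (Fin k × Fin 2)) = 2 * k + 1 ∧
    k = Fintype.card (Option (Fin k × Fin 2)) / 2 := by
  have hcard : Fintype.card (Option (Fin k × Fin 2)) = 2 * k + 1 := by
    simp [Fintype.card_option, Fintype.card_prod, mul_comm]
  refine ⟨fun _ ↦ joinK2.mem_or_mem_of_isLocalResolvingSet,
    fun _ ↦ joinK2.le_card_of_isLocalResolvingSet, ?_, hcard, by omega⟩
  have := localMetricDim_eq_of_isLocalResolvingSet (joinK2.isLocalResolvingSet_xVertices hk)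
    fun _ hW ↦ joinK2.card_xVertices.symm ▸ joinK2.le_card_of_isLocalResolvingSet hW
  rwa [joinK2.card_xVertices] at this
end
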